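/- Any algorithm that observes i.i.d. flips of a coin with heads probability either 1/2 + ε or 1/2 − ε and outputs a guess of which bias is the true one, using fewer than c·ε^{-2}·ln(1/δ) flips (for a suitable universal constant c > 0, with 0 < ε < 1/4 and 0 < δ < 1/4), must err with probability greater than δ for at least one of the two biases. -/

import Mathlib

open MeasureTheory ProbabilityTheory

/-- The law of a single coin flip with heads probability `p` (heads = `true`). -/
noncomputable def bernMeasure (p : ℝ) : Measure Bool :=
  (PMF.bernoulli (min (Real.toNNReal p) 1) (min_le_right _ _)).toMeasure

/-- The law of `n` i.i.d. flips of a coin with heads probability `p`. -/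
noncomputable def coinMeasure (n : ℕ) (p : ℝ) : Measure (Fin n → Bool) :=
  Measure.pi fun _ => bernMeasure p

/-!
If both error probabilities are at most `δ`, then for every flip sequence `x` the sections of the
two error events cover the algorithm's randomness, so the overlap `m = ∑ₓ min (P {x}) (Q {x})` of
the two laws of the flips is at most `2δ`. Writing `√(P Q) = √(min · max)`, Cauchy–Schwarz bounds
the squared Bhattacharyya coefficient `(∑ₓ √(P {x} Q {x}))² = (1 - 4ε²)ⁿ` by `m (2 - m)`, hence by
`4δ(1 - δ)`. But `n < ε⁻² ln(1/δ) / 64` gives `(1 - 4ε²)ⁿ > δ^(1/12) ≥ 4δ(1 - δ)`.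
-/

open Finset
open scoped ENNReal

section Overlap

variable {α Ω : Type*} [Fintype α] [MeasurableSpace α] [MeasurableSingletonClass α]
  [MeasurableSpace Ω]

lemma min_le_mul_add_mul_of_one_le_add {a b s t : ℝ≥0∞} (h : 1 ≤ s + t) :
    min a b ≤ a * s + b * t :=
  calc min a b ≤ min a b * (s + t) := le_mul_of_one_le_right' h
    _ = min a b * s + min a b * t := mul_add _ _ _
    _ ≤ a * s + b * t := by gcongr <;> simp

theorem sum_min_measure_singleton_le_prod_add_prod (P Q : Measure α) (ν : Measure Ω)
    [IsProbabilityMeasure ν] {S T : Set (α × Ω)} (hST : S ∪ T = Set.univ) :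
    ∑ x, min (P {x}) (Q {x}) ≤ (P.prod ν) S + (Q.prod ν) T := by
  set S' := toMeasurable (P.prod ν) S
  set T' := toMeasurable (Q.prod ν) T
  have hST' : S' ∪ T' = Set.univ := Set.eq_univ_of_univ_subset <|
    hST ▸ Set.union_subset_union (subset_toMeasurable _ S) (subset_toMeasurable _ T)
  have hcover (x : α) : 1 ≤ ν (Prod.mk x ⁻¹' S') + ν (Prod.mk x ⁻¹' T') :=
    calc 1 = ν (Prod.mk x ⁻¹' S' ∪ Prod.mk x ⁻¹' T') := by
          rw [← Set.preimage_union, hST', Set.preimage_univ, measure_univ]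
      _ ≤ _ := measure_union_le _ _
  rw [← measure_toMeasurable S, ← measure_toMeasurable T,
    Measure.prod_apply (measurableSet_toMeasurable _ _),
    Measure.prod_apply (measurableSet_toMeasurable _ _),
    lintegral_fintype, lintegral_fintype, ← sum_add_distrib]
  gcongr with x
  simpa only [mul_comm] using min_le_mul_add_mul_of_one_le_add (hcover x)

theorem sum_min_measureReal_singleton_le (P Q : Measure α) [IsFiniteMeasure P]
    [IsFiniteMeasure Q] (ν : Measure Ω) [IsProbabilityMeasure ν] {S T : Set (α × Ω)}
    (hST : S ∪ T = Set.univ) {δ : ℝ} (hδ : 0 ≤ δ) (hS : (P.prod ν) S ≤ ENNReal.ofReal δ)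
    (hT : (Q.prod ν) T ≤ ENNReal.ofReal δ) :
    ∑ x, min (P.real {x}) (Q.real {x}) ≤ 2 * δ := by
  rw [← ENNReal.ofReal_le_ofReal_iff (by positivity),
    ENNReal.ofReal_sum_of_nonneg fun x _ => by positivity]
  simp only [ENNReal.ofReal_min, measureReal_def, ENNReal.ofReal_toReal (measure_ne_top _ _)]
  calc _ ≤ (P.prod ν) S + (Q.prod ν) T := sum_min_measure_singleton_le_prod_add_prod P Q ν hST
    _ ≤ ENNReal.ofReal δ + ENNReal.ofReal δ := add_le_add hS hT
    _ = ENNReal.ofReal (2 * δ) := by rw [← ENNReal.ofReal_add hδ hδ, two_mul]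

end Overlap

theorem sq_sum_sqrt_mul_le_sum_min_mul {ι : Type*} (s : Finset ι) {f g : ι → ℝ}
    (hf : ∀ i, 0 ≤ f i) (hg : ∀ i, 0 ≤ g i) (hf1 : ∑ i ∈ s, f i = 1)
    (hg1 : ∑ i ∈ s, g i = 1) :
    (∑ i ∈ s, √(f i * g i)) ^ 2 ≤
      (∑ i ∈ s, min (f i) (g i)) * (2 - ∑ i ∈ s, min (f i) (g i)) := by
  have hmax : ∑ i ∈ s, max (f i) (g i) = 2 - ∑ i ∈ s, min (f i) (g i) := by
    rw [eq_sub_iff_add_eq', ← sum_add_distrib]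
    simp only [min_add_max, sum_add_distrib, hf1, hg1]
    norm_num
  have hmin_nonneg (i : ι) : 0 ≤ min (f i) (g i) := le_min (hf i) (hg i)
  have hmax_nonneg (i : ι) : 0 ≤ max (f i) (g i) := le_max_of_le_left (hf i)
  have hcs := Real.sum_sqrt_mul_sqrt_le s hmin_nonneg hmax_nonneg
  simp only [← Real.sqrt_mul (hmin_nonneg _), min_mul_max] at hcs
  rw [← Real.sqrt_mul (sum_nonneg fun i _ => hmin_nonneg i)] at hcs
  calc _ ≤ (√((∑ i ∈ s, min (f i) (g i)) * ∑ i ∈ s, max (f i) (g i))) ^ 2 :=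
        pow_le_pow_left₀ (sum_nonneg fun _ _ => Real.sqrt_nonneg _) hcs 2
    _ = _ := by
      rw [Real.sq_sqrt (mul_nonneg (sum_nonneg fun i _ => hmin_nonneg i)
        (sum_nonneg fun i _ => hmax_nonneg i)), hmax]

instance bernMeasure.instIsProbabilityMeasure (p : ℝ) :
    IsProbabilityMeasure (bernMeasure p) :=
  PMF.toMeasure.isProbabilityMeasure _

instance coinMeasure.instIsProbabilityMeasure (n : ℕ) (p : ℝ) :
    IsProbabilityMeasure (coinMeasure n p) := by
  unfold coinMeasure; infer_instance

section Coin

variable {r : ℝ}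

lemma bernMeasure_real_singleton (h0 : 0 ≤ r) (h1 : r ≤ 1) (b : Bool) :
    (bernMeasure r).real {b} = if b then r else 1 - r := by
  rw [measureReal_def, bernMeasure,
    PMF.toMeasure_apply_singleton _ _ (measurableSet_singleton b), PMF.bernoulli_apply,
    min_eq_left (Real.toNNReal_le_one.mpr h1)]
  cases b <;> simp [h0, h1]

lemma coinMeasure_real_singleton {n : ℕ} (h0 : 0 ≤ r) (h1 : r ≤ 1) (x : Fin n → Bool) :
    (coinMeasure n r).real {x} = ∏ i, if x i then r else 1 - r := by
  rw [coinMeasure, ← Set.univ_pi_singleton, measureReal_def, Measure.pi_pi,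
    ENNReal.toReal_prod]
  exact prod_congr rfl fun i _ => bernMeasure_real_singleton h0 h1 (x i)

end Coin

theorem sum_sqrt_coinMeasure_real_mul (n : ℕ) {p q : ℝ} (hp0 : 0 ≤ p) (hp1 : p ≤ 1)
    (hq0 : 0 ≤ q) (hq1 : q ≤ 1) :
    ∑ x : Fin n → Bool, √((coinMeasure n p).real {x} * (coinMeasure n q).real {x}) =
      (√(p * q) + √((1 - p) * (1 - q))) ^ n := by
  have hfactor (b : Bool) : 0 ≤ (if b then p else 1 - p) * (if b then q else 1 - q) := by
    cases b <;> simp only [Bool.false_eq_true, if_true, if_false] <;>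
      exact mul_nonneg (by linarith) (by linarith)
  let g (b : Bool) : ℝ := √((if b then p else 1 - p) * (if b then q else 1 - q))
  calc _ = ∑ x : Fin n → Bool, ∏ i, g (x i) := by
        refine sum_congr rfl fun x _ => ?_
        rw [coinMeasure_real_singleton hp0 hp1, coinMeasure_real_singleton hq0 hq1,
          ← prod_mul_distrib, Real.sqrt_prod _ fun i _ => hfactor (x i)]
    _ = ∏ _i : Fin n, ∑ b, g b := (Fintype.prod_sum fun _ => g).symm
    _ = _ := by simp [g]

lemma neg_four_thirds_mul_le_log_one_sub {x : ℝ} (h0 : 0 ≤ x) (h1 : x ≤ 1 / 4) :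
    -(4 / 3 * x) ≤ Real.log (1 - x) := by
  have hlog := Real.one_sub_inv_le_log_of_pos (by linarith : 0 < 1 - x)
  have hinv : (1 - x)⁻¹ ≤ 1 + 4 / 3 * x := by
    rw [inv_le_iff_one_le_mul₀ (by linarith)]
    nlinarith
  linarith

-- Without the factor `1 - δ` this would fail as `δ → 1/4`.
lemma log_four_mul_mul_one_sub_le {δ : ℝ} (h0 : 0 < δ) (h1 : δ ≤ 1 / 4) :
    Real.log (4 * δ * (1 - δ)) ≤ Real.log δ / 12 := by
  have hlog4 : Real.log 4 ≤ 3 := by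
    linarith [Real.log_le_sub_one_of_pos (by norm_num : (0 : ℝ) < 4)]
  have h4δ_le : Real.log (4 * δ) ≤ 4 * δ - 1 := Real.log_le_sub_one_of_pos (by positivity)
  have h4δ_nonpos : Real.log (4 * δ) ≤ 0 := Real.log_nonpos (by positivity) (by linarith)
  have h1δ : Real.log (1 - δ) ≤ -δ := by
    linarith [Real.log_le_sub_one_of_pos (by linarith : 0 < 1 - δ)]
  have hδ : Real.log δ = Real.log (4 * δ) - Real.log 4 := by
    rw [Real.log_mul (by norm_num) h0.ne']; ring
  rw [Real.log_mul (by positivity) (by linarith), hδ]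
  linarith

theorem four_mul_mul_one_sub_lt_pow {ε δ : ℝ} (hε : 0 < ε) (hε4 : ε < 1 / 4) (hδ : 0 < δ)
    (hδ4 : δ < 1 / 4) {n : ℕ} (hn : (n : ℝ) < 1 / 64 * ε⁻¹ ^ 2 * Real.log (1 / δ)) :
    4 * δ * (1 - δ) < (1 - 4 * ε ^ 2) ^ n := by
  have hn' : (n : ℝ) * (16 / 3 * ε ^ 2) < -(Real.log δ / 12) := by
    have := mul_lt_mul_of_pos_right hn (by positivity : 0 < 16 / 3 * ε ^ 2)
    rwa [one_div δ, Real.log_inv, show 1 / 64 * ε⁻¹ ^ 2 * -Real.log δ * (16 / 3 * ε ^ 2) =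
      -(Real.log δ / 12) * (ε⁻¹ * ε) ^ 2 by ring, inv_mul_cancel₀ hε.ne', one_pow,
      mul_one] at this
  have hbase := neg_four_thirds_mul_le_log_one_sub (by positivity : 0 ≤ 4 * ε ^ 2) (by nlinarith)
  rw [← Real.log_lt_log_iff (by nlinarith) (pow_pos (by nlinarith) n), Real.log_pow]
  calc Real.log (4 * δ * (1 - δ)) ≤ Real.log δ / 12 := log_four_mul_mul_one_sub_le hδ hδ4.le
    _ < -((n : ℝ) * (16 / 3 * ε ^ 2)) := by linarith
    _ ≤ n * Real.log (1 - 4 * ε ^ 2) := by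
      rw [← mul_neg]; exact mul_le_mul_of_nonneg_left (by linarith) n.cast_nonneg

/-- Sample-complexity lower bound for distinguishing a `(1/2−ε, 1/2+ε)`-biased coin:
there is a universal constant `c > 0` such that any (possibly randomized) algorithm using
fewer than `c·ε⁻²·ln(1/δ)` flips errs with probability greater than `δ` under at least one
of the two biases (`A` outputs `true` for the guess "heads probability is 1/2+ε"). -/
theorem coin_distinguishing_lower_bound :
    ∃ c : ℝ, 0 < c ∧
      ∀ (ε δ : ℝ), 0 < ε → ε < 1 / 4 → 0 < δ → δ < 1 / 4 →
      ∀ n : ℕ, (n : ℝ) < c * ε⁻¹ ^ 2 * Real.log (1 / δ) →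
      ∀ (Ω' : Type) (_ : MeasurableSpace Ω') (ν : Measure Ω'), IsProbabilityMeasure ν →
      ∀ A : (Fin n → Bool) → Ω' → Bool,
        ENNReal.ofReal δ <
            ((coinMeasure n (1 / 2 + ε)).prod ν) {p | A p.1 p.2 = false} ∨
        ENNReal.ofReal δ <
            ((coinMeasure n (1 / 2 - ε)).prod ν) {p | A p.1 p.2 = true} := by
  refine ⟨1 / 64, by norm_num, fun ε δ hε hε4 hδ hδ4 n hn Ω' _ ν _ A => ?_⟩
  by_contra! h
  set P := coinMeasure n (1 / 2 + ε)
  set Q := coinMeasure n (1 / 2 - ε)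
  have hcover : {z : (Fin n → Bool) × Ω' | A z.1 z.2 = false} ∪ {z | A z.1 z.2 = true} =
      Set.univ := Set.eq_univ_of_forall fun z => by cases A z.1 z.2 <;> simp
  set m := ∑ x, min (P.real {x}) (Q.real {x})
  have hoverlap : m ≤ 2 * δ := sum_min_measureReal_singleton_le P Q ν hcover hδ.le h.1 h.2
  have hmass (R : Measure (Fin n → Bool)) [IsProbabilityMeasure R] : ∑ x, R.real {x} = 1 := by
    rw [sum_measureReal_singleton, coe_univ, probReal_univ]
  have haffinity := sq_sum_sqrt_mul_le_sum_min_mul univ (fun _ => measureReal_nonneg)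
    (fun _ => measureReal_nonneg) (hmass P) (hmass Q)
  have hbase : (√((1 / 2 + ε) * (1 / 2 - ε)) + √((1 - (1 / 2 + ε)) * (1 - (1 / 2 - ε)))) ^ 2 =
      1 - 4 * ε ^ 2 := by
    rw [show (1 - (1 / 2 + ε)) * (1 - (1 / 2 - ε)) = (1 / 2 + ε) * (1 / 2 - ε) by ring,
      ← two_mul, mul_pow, Real.sq_sqrt (by nlinarith)]
    ring
  rw [sum_sqrt_coinMeasure_real_mul n (by linarith) (by linarith) (by linarith) (by linarith),
    ← pow_mul, mul_comm n 2, pow_mul, hbase] at haffinity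
  have hm_nonneg : 0 ≤ m := sum_nonneg fun x _ => le_min measureReal_nonneg measureReal_nonneg
  have hm_bound : m * (2 - m) ≤ 4 * δ * (1 - δ) := by nlinarith
  exact (haffinity.trans hm_bound).not_gt (four_mul_mul_one_sub_lt_pow hε hε4 hδ hδ4 hn)
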